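/- arXiv:1702.04760 — 9 statements merged into one kernel-verified Lean document; each statement's English description precedes it below -/
import Mathlib

section
/- Let [a_0; a_1, …, a_n] be a (σ,k)-permutiple. Then it is continuant-preserving, i.e., K_{n+1}(a_0, …, a_n) = K_{n+1}(a_{σ(0)}, …, a_{σ(n)}), if and only if K_n(a_{σ(1)}, …, a_{σ(n)}) = k·K_n(a_1, …, a_n). -/
/-- Value of the finite simple continued fraction `[x₀; x₁, …, xₙ]`. -/
def cfv : List ℚ → ℚ
  | [] => 0
  | [x] => x
  | x :: y :: t => x + 1 / cfv (y :: t)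

/-- The continuant `K(x₀, …, xₙ)`: `K() = 1`, `K(x₀) = x₀`, and the usual
three-term recurrence. -/
def cont : List ℕ → ℕ
  | [] => 1
  | [x] => x
  | x :: y :: t => x * cont (y :: t) + cont t

/-- The digit string of `a`, as a list of rationals. -/
def digitsQ {N : ℕ} (a : Fin N → ℕ) : List ℚ := (List.ofFn a).map (fun x => (x : ℚ))

/-- `[a₀; a₁, …, aₙ]` (canonical: positive digits, last digit ≥ 2) is a
`(σ,k)`-permutiple: it equals `k` times the continued fraction of the permuted digits. -/
def IsPermutiple {n : ℕ} (a : Fin (n+1) → ℕ) (σ : Equiv.Perm (Fin (n+1))) (k : ℕ) : Prop :=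
  (∀ j, 0 < a j) ∧ 2 ≤ a (Fin.last n) ∧ 1 < k ∧
    cfv (digitsQ a) = k * cfv (digitsQ (a ∘ σ))

/-- A `(σ,k)`-permutiple is continuant-preserving if
`K(a₀,…,aₙ) = K(a_{σ(0)},…,a_{σ(n)})`. -/
def ContinuantPreserving {n : ℕ} (a : Fin (n+1) → ℕ) (σ : Equiv.Perm (Fin (n+1))) : Prop :=
  cont (List.ofFn a) = cont (List.ofFn (a ∘ σ))

/-- A `(σ,k)`-permutiple is perfect if `a_j = k·a_{σ(j)}` for even `j` and
`a_{σ(j)} = k·a_j` for odd `j`. -/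
def IsPerfect {n : ℕ} (a : Fin (n+1) → ℕ) (σ : Equiv.Perm (Fin (n+1))) (k : ℕ) : Prop :=
  ∀ j : Fin (n+1), (Even (j : ℕ) → a j = k * a (σ j)) ∧ (Odd (j : ℕ) → a (σ j) = k * a j)

/-- A `(σ,k)`-permutiple is symmetric if `a_j·a_{n−j} = a_{σ(j)}·a_{σ(n−j)}` for all `j`. -/
def IsSymmetric {n : ℕ} (a : Fin (n+1) → ℕ) (σ : Equiv.Perm (Fin (n+1))) : Prop :=
  ∀ j : Fin (n+1), a j * a j.rev = a (σ j) * a (σ j.rev)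

/-- A Landess permutiple: a continuant-preserving `(σ,k)`-permutiple with
`q_{n−1} = q'_{n−1}` and `p_{n−1} = k·p'_{n−1}`. -/
def IsLandess {n : ℕ} (a : Fin (n+1) → ℕ) (σ : Equiv.Perm (Fin (n+1))) (k : ℕ) : Prop :=
  IsPermutiple a σ k ∧ ContinuantPreserving a σ ∧
    cont ((List.ofFn a).tail.dropLast) = cont ((List.ofFn (a ∘ σ)).tail.dropLast) ∧
    cont ((List.ofFn a).dropLast) = k * cont ((List.ofFn (a ∘ σ)).dropLast)

/-!
Writing `p = K(a₀,…,aₙ)` and `q = K(a₁,…,aₙ)`, the value of `[a₀; a₁, …, aₙ]` is `p / q`.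
So, with `p', q'` the continuants of the permuted digits, the permutiple equation reads
`p q' = k p' q`, and since all four continuants and `k` are positive, `p = p'` holds exactly
when `q' = k q`.
-/

lemma cont_pos {l : List ℕ} (h : ∀ x ∈ l, 0 < x) : 0 < cont l := by
  induction l using cont.induct with
  | case1 => simp [cont]
  | case2 x => simpa [cont] using h x
  | case3 x y t ih =>
    have hyt : 0 < cont (y :: t) := ih fun z hz => h z (List.mem_cons_of_mem x hz)
    exact Nat.add_pos_left (Nat.mul_pos (h x List.mem_cons_self) hyt) _

lemma cfv_map_natCast {l : List ℕ} (h : ∀ x ∈ l, 0 < x) (hne : l ≠ []) :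
    cfv (l.map (Nat.cast : ℕ → ℚ)) = cont l / cont l.tail := by
  induction l using cont.induct with
  | case1 => exact absurd rfl hne
  | case2 x => simp [cfv, cont]
  | case3 x y t ih =>
    have htail : ∀ z ∈ y :: t, 0 < z := fun z hz => h z (List.mem_cons_of_mem x hz)
    have hyt : (0 : ℚ) < cont (y :: t) := mod_cast cont_pos htail
    have hval : cfv ((y :: t).map (Nat.cast : ℕ → ℚ)) = cont (y :: t) / cont t :=
      ih htail (List.cons_ne_nil y t)
    simp only [List.map_cons] at hval ⊢
    rw [cfv, hval, List.tail_cons, cont]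
    push_cast
    field_simp

lemma pos_of_mem_ofFn {N : ℕ} {a : Fin N → ℕ} (ha : ∀ j, 0 < a j) :
    ∀ x ∈ List.ofFn a, 0 < x := by
  simpa [List.mem_ofFn] using ha

-- The coercion in `digitsQ` elaborates as a lift through the list monad, not as `map Nat.cast`.
lemma digitsQ_eq_map_natCast {N : ℕ} (a : Fin N → ℕ) :
    digitsQ a = (List.ofFn a).map Nat.cast := by
  simp only [digitsQ, List.map_id_fun', id]
  exact List.flatMap_pure_eq_map _ _

lemma cfv_digitsQ {N : ℕ} {a : Fin (N + 1) → ℕ} (ha : ∀ j, 0 < a j) :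
    cfv (digitsQ a) = cont (List.ofFn a) / cont (List.ofFn a).tail := by
  rw [digitsQ_eq_map_natCast]
  exact cfv_map_natCast (pos_of_mem_ofFn ha) (by simp)

lemma cont_ofFn_tail_pos {N : ℕ} {a : Fin N → ℕ} (ha : ∀ j, 0 < a j) :
    0 < cont (List.ofFn a).tail :=
  cont_pos fun x hx => pos_of_mem_ofFn ha x (List.mem_of_mem_tail hx)

lemma IsPermutiple.cont_mul_cont_tail {n : ℕ} {a : Fin (n + 1) → ℕ}
    {σ : Equiv.Perm (Fin (n + 1))} {k : ℕ} (h : IsPermutiple a σ k) :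
    cont (List.ofFn a) * cont (List.ofFn (a ∘ σ)).tail =
      k * cont (List.ofFn (a ∘ σ)) * cont (List.ofFn a).tail := by
  obtain ⟨ha, -, -, hcf⟩ := h
  have haσ : ∀ j, 0 < (a ∘ σ) j := fun j => ha (σ j)
  have hq : (0 : ℚ) < cont (List.ofFn a).tail := mod_cast cont_ofFn_tail_pos ha
  have hq' : (0 : ℚ) < cont (List.ofFn (a ∘ σ)).tail := mod_cast cont_ofFn_tail_pos haσ
  rw [cfv_digitsQ ha, cfv_digitsQ haσ] at hcf
  field_simp at hcf
  exact_mod_cast (by linear_combination hcf :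
    (cont (List.ofFn a) : ℚ) * cont (List.ofFn (a ∘ σ)).tail =
      k * cont (List.ofFn (a ∘ σ)) * cont (List.ofFn a).tail)

/-- A `(σ,k)`-permutiple is continuant-preserving iff
`K_n(a_{σ(1)},…,a_{σ(n)}) = k·K_n(a_1,…,a_n)`. -/
theorem stmt0 {n : ℕ} (a : Fin (n+1) → ℕ) (σ : Equiv.Perm (Fin (n+1))) (k : ℕ)
    (h : IsPermutiple a σ k) :
    ContinuantPreserving a σ ↔
      cont (List.ofFn (a ∘ σ)).tail = k * cont (List.ofFn a).tail := by
  have hcross := h.cont_mul_cont_tail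
  obtain ⟨ha, -, hk, -⟩ := h
  have hp' : 0 < cont (List.ofFn (a ∘ σ)) := cont_pos (pos_of_mem_ofFn fun j => ha (σ j))
  have hkq : 0 < k * cont (List.ofFn a).tail := Nat.mul_pos (by omega) (cont_ofFn_tail_pos ha)
  unfold ContinuantPreserving
  constructor
  · intro hp
    refine Nat.eq_of_mul_eq_mul_left hp' ?_
    rw [← hp, hcross, hp]
    ring
  · intro hq'
    rw [hq'] at hcross
    refine Nat.eq_of_mul_eq_mul_right hkq ?_
    rw [hcross]
    ring
end

section
/- Let a_0 ≥ 1, a_1 ≥ 2 be integers, k > 1 an integer, and σ a permutation of {0,1}. Then [a_0; a_1] is a (σ,k)-permutiple if and only if σ is the transposition swapping 0 and 1 and a_0 = k·a_1. In particular, every 2-digit permutiple has the form [k·s; s] for some integer s ≥ 2. -/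
/-!
Both `[a₀; a₁] = (a₀a₁ + 1)/a₁` and `[a₁; a₀] = (a₀a₁ + 1)/a₀` share the numerator `a₀a₁ + 1`,
so for the transposition the permutiple equation reduces to `a₀ = k·a₁`, while for the
identity it would force `k = 1`.
-/

theorem Fin.perm_two_eq_one_or_eq_swap (σ : Equiv.Perm (Fin 2)) : σ = 1 ∨ σ = Equiv.swap 0 1 := by
  revert σ; decide

theorem cfv_pair (x y : ℚ) : cfv [x, y] = x + 1 / y := rfl

theorem digitsQ_fin_two (a : Fin 2 → ℕ) : digitsQ a = [(a 0 : ℚ), (a 1 : ℚ)] := rfl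

theorem add_one_div_eq_mul_add_one_div_iff {K : Type*} [Field K] {x y : K} (c : K)
    (hx : x ≠ 0) (hy : y ≠ 0) (hxy : x * y + 1 ≠ 0) :
    x + 1 / y = c * (y + 1 / x) ↔ x = c * y := by
  have hl : x + 1 / y = (x * y + 1) / y := by field_simp
  have hr : y + 1 / x = (x * y + 1) / x := by field_simp
  rw [hl, hr, mul_div_assoc', div_eq_div_iff hy hx, ← mul_right_inj' hxy (b := x)]
  constructor <;> intro h <;> linear_combination h

/-- For `a₀ ≥ 1`, `a₁ ≥ 2`, `k > 1`, and a permutation `σ` of `{0,1}`: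
`[a₀; a₁]` is a `(σ,k)`-permutiple iff `σ` is the transposition swapping `0` and `1`
and `a₀ = k·a₁` (so every 2-digit permutiple has the form `[k·s; s]` with `s ≥ 2`). -/
theorem stmt4 (a : Fin 2 → ℕ) (σ : Equiv.Perm (Fin 2)) (k : ℕ)
    (h0 : 1 ≤ a 0) (h1 : 2 ≤ a 1) (hk : 1 < k) :
    cfv (digitsQ a) = k * cfv (digitsQ (a ∘ σ)) ↔
      σ = Equiv.swap 0 1 ∧ a 0 = k * a 1 := by
  have ha0 : (0 : ℚ) < a 0 := by exact_mod_cast h0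
  have ha1 : (0 : ℚ) < a 1 := by exact_mod_cast (by omega : 0 < a 1)
  rcases Fin.perm_two_eq_one_or_eq_swap σ with rfl | rfl
  · have hcf : cfv (digitsQ a) ≠ 0 := by rw [digitsQ_fin_two, cfv_pair]; positivity
    have hswap : (1 : Equiv.Perm (Fin 2)) ≠ Equiv.swap 0 1 := by decide
    simp [right_eq_mul₀ hcf, hk.ne', hswap]
  · rw [digitsQ_fin_two, digitsQ_fin_two, cfv_pair, cfv_pair]
    simp only [Function.comp_apply, Equiv.swap_apply_left, Equiv.swap_apply_right, true_and]
    rw [add_one_div_eq_mul_add_one_div_iff _ ha0.ne' ha1.ne' (by positivity)]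
    exact_mod_cast Iff.rfl
end

section
/- Let a_0, a_1, a_2 be positive integers with a_2 ≥ 2 and let k > 1 be an integer. Then [a_0; a_1, a_2] = k·[a_2; a_1, a_0] if and only if a_0·a_1 + 1 = k·(a_1·a_2 + 1). -/
/-- For positive integers `a₀, a₁, a₂` with `a₂ ≥ 2` and an integer `k > 1`:
`[a₀; a₁, a₂] = k·[a₂; a₁, a₀]` iff `a₀·a₁ + 1 = k·(a₁·a₂ + 1)`. -/
theorem stmt6 (a0 a1 a2 k : ℕ) (h0 : 0 < a0) (h1 : 0 < a1) (h2 : 2 ≤ a2) (hk : 1 < k) :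
    cfv [(a0 : ℚ), (a1 : ℚ), (a2 : ℚ)] = k * cfv [(a2 : ℚ), (a1 : ℚ), (a0 : ℚ)] ↔
      a0 * a1 + 1 = k * (a1 * a2 + 1) := by
  have h0' : (0:ℚ) < a0 := by exact_mod_cast h0
  have h1' : (0:ℚ) < a1 := by exact_mod_cast h1
  have h2' : (0:ℚ) < a2 := by positivity
  have hd1 : (a1:ℚ) * a2 + 1 ≠ 0 := by positivity
  have hd2 : (a0:ℚ) * a1 + 1 ≠ 0 := by positivity
  have hN : (0:ℚ) < a0 * a1 * a2 + a0 + a2 := by positivity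
  have e1 : cfv [(a0 : ℚ), (a1 : ℚ), (a2 : ℚ)] = (a0 * a1 * a2 + a0 + a2) / (a1 * a2 + 1) := by
    simp only [cfv]
    field_simp
  have e2 : cfv [(a2 : ℚ), (a1 : ℚ), (a0 : ℚ)] = (a0 * a1 * a2 + a0 + a2) / (a0 * a1 + 1) := by
    simp only [cfv]
    field_simp
    ring
  rw [e1, e2]
  rw [← mul_div_assoc, div_eq_div_iff hd1 hd2]
  constructor
  · intro h
    have : (a0 * a1 + 1 : ℚ) = k * (a1 * a2 + 1) := by
      have h' : (a0 * a1 * a2 + a0 + a2 : ℚ) * (a0 * a1 + 1) =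
          (a0 * a1 * a2 + a0 + a2 : ℚ) * (k * (a1 * a2 + 1)) := by linear_combination h
      exact mul_left_cancel₀ (ne_of_gt hN) h'
    exact_mod_cast this
  · intro h
    have h' : (a0 * a1 + 1 : ℚ) = k * (a1 * a2 + 1) := by exact_mod_cast h
    linear_combination (a0 * a1 * a2 + a0 + a2 : ℚ) * h'
end

section
/- Every perfect (σ,k)-permutiple [a_0; a_1, …, a_n] has an even number of digits (i.e., n is odd), and every perfect (σ,k)-permutiple is continuant-preserving. -/
inductive ContRel (k : ℕ) : List ℕ → List ℕ → Prop
  | nil : ContRel k [] []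
  | cons (c d : ℕ) {la lb : List ℕ} : ContRel k la lb →
      ContRel k (k * c :: d :: la) (c :: k * d :: lb)

lemma rel_cont {k : ℕ} {la lb : List ℕ} (h : ContRel k la lb) :
    cont la = cont lb ∧ ∀ d, k * cont (d :: la) = cont (k * d :: lb) := by
  induction h with
  | nil => exact ⟨rfl, fun d => rfl⟩
  | cons c d h ih =>
    rename_i la' lb'
    obtain ⟨ih1, ih2⟩ := ih
    have hP : cont (k * c :: d :: la') = cont (c :: k * d :: lb') := by
      show k * c * cont (d :: la') + cont la' = c * cont (k * d :: lb') + cont lb'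
      rw [← ih2, ih1]; ring
    refine ⟨hP, fun d' => ?_⟩
    show k * (d' * cont (k * c :: d :: la') + cont (d :: la'))
        = k * d' * cont (c :: k * d :: lb') + cont (k * d :: lb')
    rw [← hP, ← ih2]; ring

lemma buildR (k : ℕ) : ∀ (m : ℕ) (a b : Fin m → ℕ), Even m →
    (∀ i : Fin m, (Even i.val → a i = k * b i) ∧ (Odd i.val → b i = k * a i)) →
    ContRel k (List.ofFn a) (List.ofFn b) := by
  intro m
  induction m using Nat.twoStepInduction with
  | zero => intro a b _ _; simpa using ContRel.nil
  | one => intro a b he _; simp at he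
  | more m ih _ =>
    intro a b he hcond
    rw [List.ofFn_succ, List.ofFn_succ, List.ofFn_succ (f := b),
      List.ofFn_succ (f := fun i => b i.succ)]
    have h0 : a 0 = k * b 0 := (hcond 0).1 (by simp)
    have h1 : b ((0 : Fin (m+1)).succ) = k * a ((0 : Fin (m+1)).succ) :=
      (hcond _).2 (by simp)
    rw [h0, h1]
    exact ContRel.cons (b 0) (a ((0 : Fin (m+1)).succ))
      (ih (fun i => a i.succ.succ) (fun i => b i.succ.succ)
        (by rcases he with ⟨t, ht⟩; exact ⟨t - 1, by omega⟩)
        (fun i => by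
          have := hcond i.succ.succ
          constructor
          · intro hi
            exact this.1 (by simpa [Fin.val_succ, Nat.even_add_one, Nat.not_even_iff_odd,
              Nat.not_odd_iff_even] using hi)
          · intro hi
            exact this.2 (by simpa [Fin.val_succ, Nat.odd_add_one, Nat.even_add_one,
              Nat.not_even_iff_odd, Nat.not_odd_iff_even] using hi)))

/-- Every perfect `(σ,k)`-permutiple has an even number of digits (`n` is odd)
and is continuant-preserving. -/
theorem stmt10 {n : ℕ} (a : Fin (n+1) → ℕ) (σ : Equiv.Perm (Fin (n+1))) (k : ℕ)
    (h : IsPermutiple a σ k) (hp : IsPerfect a σ k) :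
    Odd n ∧ ContinuantPreserving a σ := by
  classical
  obtain ⟨hpos, -, hk, -⟩ := h
  have hodd : Odd n := by
    set E := Finset.univ.filter (fun j : Fin (n+1) => Even (j : ℕ)) with hE
    set O := Finset.univ.filter (fun j : Fin (n+1) => ¬ Even (j : ℕ)) with hO
    have h1 : ∏ j ∈ E, a j = k ^ E.card * ∏ j ∈ E, a (σ j) := by
      rw [Finset.prod_congr rfl (fun j hj => (hp j).1 (Finset.mem_filter.mp hj).2),
        Finset.prod_mul_distrib, Finset.prod_const]
    have h2 : ∏ j ∈ O, a (σ j) = k ^ O.card * ∏ j ∈ O, a j := by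
      rw [Finset.prod_congr rfl (fun j hj =>
        (hp j).2 (Nat.not_even_iff_odd.mp (Finset.mem_filter.mp hj).2)),
        Finset.prod_mul_distrib, Finset.prod_const]
    have hperm : ∏ j, a (σ j) = ∏ j, a j := Equiv.prod_comp σ a
    have hsa : ∏ j, a j = (∏ j ∈ E, a j) * ∏ j ∈ O, a j :=
      (Finset.prod_filter_mul_prod_filter_not _ _ _).symm
    have hsb : ∏ j, a (σ j) = (∏ j ∈ E, a (σ j)) * ∏ j ∈ O, a (σ j) :=
      (Finset.prod_filter_mul_prod_filter_not _ _ _).symm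
    have hX : 0 < (∏ j ∈ E, a (σ j)) * ∏ j ∈ O, a j :=
      Nat.mul_pos (Finset.prod_pos fun j _ => hpos _) (Finset.prod_pos fun j _ => hpos _)
    have key : k ^ E.card * ((∏ j ∈ E, a (σ j)) * ∏ j ∈ O, a j)
        = k ^ O.card * ((∏ j ∈ E, a (σ j)) * ∏ j ∈ O, a j) := by
      calc k ^ E.card * ((∏ j ∈ E, a (σ j)) * ∏ j ∈ O, a j)
          = (∏ j ∈ E, a j) * ∏ j ∈ O, a j := by rw [h1]; ring
        _ = ∏ j, a j := hsa.symm
        _ = ∏ j, a (σ j) := hperm.symm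
        _ = (∏ j ∈ E, a (σ j)) * ∏ j ∈ O, a (σ j) := hsb
        _ = k ^ O.card * ((∏ j ∈ E, a (σ j)) * ∏ j ∈ O, a j) := by rw [h2]; ring
    have hpow : k ^ E.card = k ^ O.card := Nat.eq_of_mul_eq_mul_right hX key
    have hcard : E.card = O.card := Nat.pow_right_injective hk hpow
    have hsum : E.card + O.card = n + 1 := by
      rw [hE, hO, Finset.card_filter_add_card_filter_not]
      simp
    rw [Nat.odd_iff]; omega
  refine ⟨hodd, ?_⟩
  exact (rel_cont (buildR k (n+1) a (a ∘ σ) hodd.add_one (fun i => hp i))).1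
end

section
/- Let n be odd, let a_0, …, a_n be positive integers with a_n ≥ 2, and let k > 1 be an integer. Then [a_0; a_1, …, a_n] is a perfect k-reverse multiple if and only if a_j = k·a_{n−j} for every even j with 0 ≤ j ≤ n. -/
/-- Alternately scale entries by `k` (when flag true) and `1/k` (when flag false). -/
def altk (k : ℚ) : Bool → List ℚ → List ℚ
  | _, [] => []
  | true, x :: t => k * x :: altk k false t
  | false, x :: t => x / k :: altk k true t

lemma altk_length (k : ℚ) : ∀ (b : Bool) (l : List ℚ), (altk k b l).length = l.length := by
  intro b l
  induction l generalizing b with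
  | nil => cases b <;> rfl
  | cons x t ih => cases b <;> simp [altk, ih]

lemma cfv_cons (x : ℚ) (t : List ℚ) (ht : t ≠ []) : cfv (x :: t) = x + 1 / cfv t := by
  cases t with
  | nil => exact absurd rfl ht
  | cons y s => rfl

lemma cfv_altk (k : ℚ) : ∀ (b : Bool) (l : List ℚ),
    cfv (altk k b l) = if b then k * cfv l else cfv l / k := by
  intro b l
  induction l generalizing b with
  | nil => cases b <;> simp [altk, cfv]
  | cons x t ih =>
    cases t with
    | nil => cases b <;> simp [altk, cfv]
    | cons y s =>
      have hne : ∀ b' : Bool, altk k b' (y :: s) ≠ [] := by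
        intro b' h
        have := altk_length k b' (y :: s)
        rw [h] at this
        simp at this
      cases b with
      | true =>
        rw [show altk k true (x :: y :: s) = k * x :: altk k false (y :: s) from rfl,
          cfv_cons _ _ (hne false), cfv_cons x _ (by simp), ih false]
        simp only [Bool.false_eq_true, if_false, if_true, if_pos trivial,
          div_eq_mul_inv, one_div, mul_inv, inv_inv]
        ring
      | false =>
        rw [show altk k false (x :: y :: s) = x / k :: altk k true (y :: s) from rfl,
          cfv_cons _ _ (hne true), cfv_cons x _ (by simp), ih true]
        simp only [Bool.false_eq_true, if_false, if_true, if_pos trivial,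
          div_eq_mul_inv, one_div, mul_inv, inv_inv]
        ring

lemma altk_getElem (k : ℚ) : ∀ (l : List ℚ) (b : Bool) (i : ℕ) (h : i < l.length),
    (altk k b l)[i]'(by rw [altk_length]; exact h) =
      if Even i then (if b then k * l[i] else l[i] / k)
      else (if b then l[i] / k else k * l[i]) := by
  intro l
  induction l with
  | nil => intro b i h; simp at h
  | cons x t ih =>
    intro b i h
    cases i with
    | zero => cases b <;> simp [altk]
    | succ i =>
      have hi : i < t.length := by simpa using h
      have step : ∀ b : Bool, (altk k b (x :: t))[i+1]'(by
          rw [altk_length]; simpa using h) = (altk k (!b) t)[i]'(by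
          rw [altk_length]; exact hi) := by
        intro b; cases b <;> rfl
      rw [step, ih (!b) i hi]
      by_cases he : Even i <;> cases b <;>
        simp [Nat.even_add_one, he]

lemma digitsQ_eq {N : ℕ} (a : Fin N → ℕ) :
    digitsQ a = List.map (fun x : ℕ => (x:ℚ)) (List.ofFn a) := by
  show List.map _ ((List.ofFn a).flatMap fun a => [((a:ℕ) : ℚ)]) = _
  rw [List.map_id']
  induction (List.ofFn a) with
  | nil => rfl
  | cons x t ih => simp_all

lemma digitsQ_length {N : ℕ} (a : Fin N → ℕ) : (digitsQ a).length = N := by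
  rw [digitsQ_eq]; simp

lemma digitsQ_getElem {N : ℕ} (a : Fin N → ℕ) (i : ℕ) (h : i < N) :
    (digitsQ a)[i]'(by rw [digitsQ_length]; exact h) = (a ⟨i, h⟩ : ℚ) := by
  simp [digitsQ_eq]

/-- For odd `n`, positive digits with `aₙ ≥ 2` and integer `k > 1`:
`[a₀; …, aₙ]` is a perfect `k`-reverse multiple iff `a_j = k·a_{n−j}` for every even `j`. -/
theorem stmt11 {n : ℕ} (hn : Odd n) (a : Fin (n+1) → ℕ) (k : ℕ)
    (ha : ∀ j, 0 < a j) (hlast : 2 ≤ a (Fin.last n)) (hk : 1 < k) :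
    (IsPermutiple a Fin.revPerm k ∧ IsPerfect a Fin.revPerm k) ↔
      ∀ j : Fin (n+1), Even (j : ℕ) → a j = k * a j.rev := by
  have hk0 : (k : ℚ) ≠ 0 := by positivity
  constructor
  · rintro ⟨-, hperf⟩ j hj
    have := (hperf j).1 hj
    simpa using this
  · intro h
    -- parity facts
    have hodd : ∀ j : Fin (n+1), Odd (j : ℕ) → a (Fin.rev j) = k * a j := by
      intro j hj
      have hle : (j : ℕ) ≤ n := Nat.lt_succ_iff.mp j.isLt
      have hev : Even ((Fin.rev j : Fin (n+1)) : ℕ) := by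
        rw [Fin.val_rev]
        have : n + 1 - ((j : ℕ) + 1) = n - (j : ℕ) := by omega
        rw [this]
        exact Nat.Odd.sub_odd hn hj
      have := h (Fin.rev j) hev
      rwa [Fin.rev_rev] at this
    have hcfv : cfv (digitsQ a) = k * cfv (digitsQ (a ∘ Fin.revPerm)) := by
      have heq : digitsQ a = altk (k : ℚ) true (digitsQ (a ∘ Fin.revPerm)) := by
        apply List.ext_getElem
        · rw [digitsQ_length, altk_length, digitsQ_length]
        · intro i h1 h2
          have hi : i < n + 1 := by rw [digitsQ_length] at h1; exact h1
          rw [digitsQ_getElem a i hi, altk_getElem (k : ℚ) _ true i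
            (by rw [digitsQ_length]; exact hi), digitsQ_getElem (a ∘ Fin.revPerm) i hi]
          simp only [if_pos rfl, Function.comp_apply, Fin.revPerm_apply]
          by_cases he : Even i
          · rw [if_pos he, h ⟨i, hi⟩ he]
            push_cast
            ring
          · rw [if_neg he]
            have ho : Odd ((⟨i, hi⟩ : Fin (n+1)) : ℕ) := Nat.odd_iff.mpr (Nat.not_even_iff.mp he)
            rw [hodd ⟨i, hi⟩ ho]
            push_cast
            field_simp
      rw [heq, cfv_altk]
      simp
    refine ⟨⟨ha, hlast, hk, hcfv⟩, ?_⟩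
    intro j
    constructor
    · intro hj
      simpa using h j hj
    · intro hj
      simpa using hodd j hj
end

section
/- Let ψ be the (n+1)-cycle on {0, 1, …, n} given by ψ(j) = j+1 mod (n+1), and let ℓ ≥ 0 be an even integer. Then there exists no perfect (ψ^ℓ, k)-permutiple [a_0; a_1, …, a_n] for any integer k > 1. -/
/-!
If `a` is perfect for `σ`, multiplying the relations over the even and over the odd indices,
and using that `∏ a ∘ σ = ∏ a`, gives `k ^ #even = k ^ #odd`; so `n + 1` is even. When moreover
`σ = ψ ^ ℓ` with `ℓ` even, `σ` then maps even indices to even indices, and following the orbit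
of `0` gives `a₀ = k ^ m · a₀` with `m = orderOf σ`, forcing `k = 1`.
-/

open Finset Equiv

theorem Equiv.Perm.eq_one_of_mapsTo_of_eq_mul_apply {α : Type*} [Finite α] {σ : Perm α}
    {s : Set α} (hs : Set.MapsTo σ s s) {a : α → ℕ} {k : ℕ}
    (ha : ∀ x ∈ s, a x = k * a (σ x)) {x : α} (hx : x ∈ s) (hax : a x ≠ 0) : k = 1 := by
  have orbit : ∀ m : ℕ, a x = k ^ m * a ((σ ^ m) x) := by
    intro m
    induction m with
    | zero => simp
    | succ m ih =>
      have hmem : (σ ^ m) x ∈ s := by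
        rw [Perm.coe_pow]
        exact hs.iterate m hx
      rw [ih, ha _ hmem, pow_succ' σ, Perm.mul_apply, pow_succ, mul_assoc]
  have hself := orbit (orderOf σ)
  rw [pow_orderOf_eq_one, Perm.one_apply] at hself
  have hpow : k ^ orderOf σ = 1 :=
    Nat.eq_of_mul_eq_mul_right (Nat.pos_of_ne_zero hax) (by rw [one_mul]; exact hself.symm)
  exact (Nat.pow_eq_one.mp hpow).resolve_right (orderOf_pos σ).ne'

theorem coe_finRotate_pow_apply {n : ℕ} (ℓ : ℕ) (i : Fin (n + 1)) :
    ((finRotate (n + 1) ^ ℓ) i : ℕ) = (i + ℓ) % (n + 1) := by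
  induction ℓ with
  | zero => simp [Nat.mod_eq_of_lt i.isLt]
  | succ ℓ ih =>
    rw [pow_succ', Perm.mul_apply, finRotate_apply, Fin.val_add, ih, Fin.val_one',
      ← Nat.add_mod, add_assoc]

theorem even_finRotate_pow_apply {n ℓ : ℕ} (hn : Even (n + 1)) (hℓ : Even ℓ) {i : Fin (n + 1)}
    (hi : Even (i : ℕ)) : Even ((finRotate (n + 1) ^ ℓ) i : ℕ) := by
  rw [coe_finRotate_pow_apply]
  exact (hi.add hℓ).mod_even hn

namespace IsPerfect

variable {n k : ℕ} {a : Fin (n + 1) → ℕ} {σ : Perm (Fin (n + 1))}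

theorem card_even_eq_card_odd (h : IsPerfect a σ k) (hpos : ∀ j, 0 < a j) (hk : 1 < k) :
    #{j : Fin (n + 1) | Even (j : ℕ)} = #{j : Fin (n + 1) | ¬Even (j : ℕ)} := by
  set E := ({j | Even (j : ℕ)} : Finset (Fin (n + 1)))
  set O := ({j | ¬Even (j : ℕ)} : Finset (Fin (n + 1)))
  have hE : ∏ j ∈ E, a j = k ^ #E * ∏ j ∈ E, a (σ j) := by
    rw [← prod_const, ← prod_mul_distrib]
    exact prod_congr rfl fun j hj => (h j).1 (mem_filter.mp hj).2
  have hO : ∏ j ∈ O, a (σ j) = k ^ #O * ∏ j ∈ O, a j := by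
    rw [← prod_const, ← prod_mul_distrib]
    exact prod_congr rfl fun j hj => (h j).2 (Nat.not_even_iff_odd.mp (mem_filter.mp hj).2)
  have hσ : (∏ j ∈ E, a (σ j)) * ∏ j ∈ O, a (σ j) = (∏ j ∈ E, a j) * ∏ j ∈ O, a j := by
    rw [prod_filter_mul_prod_filter_not, prod_filter_mul_prod_filter_not]
    exact Equiv.prod_comp σ a
  have hprod : 0 < (∏ j ∈ E, a (σ j)) * ∏ j ∈ O, a j :=
    Nat.mul_pos (prod_pos fun j _ => hpos _) (prod_pos fun j _ => hpos _)
  refine Nat.pow_right_injective hk (Nat.eq_of_mul_eq_mul_right hprod ?_)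
  rw [hO, hE] at hσ
  linarith

theorem even_succ (h : IsPerfect a σ k) (hpos : ∀ j, 0 < a j) (hk : 1 < k) : Even (n + 1) := by
  have hcard := card_filter_add_card_filter_not (s := (univ : Finset (Fin (n + 1))))
    (fun j : Fin (n + 1) => Even (j : ℕ))
  rw [card_univ, Fintype.card_fin, h.card_even_eq_card_odd hpos hk] at hcard
  exact ⟨_, hcard.symm⟩

end IsPerfect

/-- Let `ψ` be the `(n+1)`-cycle `j ↦ j+1 (mod n+1)` and `ℓ ≥ 0` even. There is
no perfect `(ψ^ℓ, k)`-permutiple for any `k > 1`. -/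
theorem stmt12 {n : ℕ} (ℓ k : ℕ) (hl : Even ℓ) (a : Fin (n+1) → ℕ) :
    ¬ (IsPermutiple a ((finRotate (n+1)) ^ ℓ) k ∧ IsPerfect a ((finRotate (n+1)) ^ ℓ) k) := by
  rintro ⟨⟨hpos, -, hk, -⟩, hperf⟩
  have hn : Even (n + 1) := hperf.even_succ hpos hk
  have hk1 : k = 1 :=
    Perm.eq_one_of_mapsTo_of_eq_mul_apply (s := {j : Fin (n + 1) | Even (j : ℕ)})
      (fun _ hj => even_finRotate_pow_apply hn hl hj) (fun j hj => (hperf j).1 hj)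
      (x := 0) Even.zero (hpos 0).ne'
  omega
end

section
/- Every k-reverse multiple is symmetric, and every perfect (σ,k)-permutiple is symmetric. -/
private lemma perfect_odd {n : ℕ} (a : Fin (n+1) → ℕ) (σ : Equiv.Perm (Fin (n+1))) (k : ℕ)
    (hpos : ∀ j, 0 < a j) (hk : 1 < k) (hperf : IsPerfect a σ k) : Odd n := by
  have key : ∀ j : Fin (n+1),
      a j * k ^ (if Odd (j : ℕ) then 1 else 0) = a (σ j) * k ^ (if Even (j : ℕ) then 1 else 0) := by
    intro j
    rcases Nat.even_or_odd (j : ℕ) with he | ho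
    · have h1 := (hperf j).1 he
      simp [he, Nat.not_odd_iff_even.mpr he, h1, mul_comm]
    · have h1 := (hperf j).2 ho
      simp [ho, Nat.not_even_iff_odd.mpr ho, h1, mul_comm]
  have hprod : (∏ j : Fin (n+1), a j * k ^ (if Odd (j : ℕ) then 1 else 0)) =
      ∏ j : Fin (n+1), a (σ j) * k ^ (if Even (j : ℕ) then 1 else 0) :=
    Finset.prod_congr rfl (fun j _ => key j)
  rw [Finset.prod_mul_distrib, Finset.prod_mul_distrib, Finset.prod_pow_eq_pow_sum,
    Finset.prod_pow_eq_pow_sum, Equiv.prod_comp σ a] at hprod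
  have hP : 0 < ∏ j : Fin (n+1), a j := Finset.prod_pos (fun j _ => hpos j)
  have hpow : k ^ (∑ j : Fin (n+1), if Odd (j : ℕ) then 1 else 0) =
      k ^ (∑ j : Fin (n+1), if Even (j : ℕ) then 1 else 0) :=
    Nat.eq_of_mul_eq_mul_left hP hprod
  have hexp := Nat.pow_right_injective hk hpow
  have hsum : (∑ j : Fin (n+1), if Odd (j : ℕ) then 1 else 0) +
      (∑ j : Fin (n+1), if Even (j : ℕ) then 1 else 0) = n + 1 := by
    rw [← Finset.sum_add_distrib]
    have : ∀ j : Fin (n+1),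
        ((if Odd (j : ℕ) then 1 else 0) + (if Even (j : ℕ) then 1 else 0)) = 1 := by
      intro j
      rcases Nat.even_or_odd (j : ℕ) with he | ho
      · simp [he, Nat.not_odd_iff_even.mpr he]
      · simp [ho, Nat.not_even_iff_odd.mpr ho]
    simp [Finset.sum_congr rfl (fun j _ => this j)]
  rw [Nat.odd_iff]
  omega
/-- Every `k`-reverse multiple is symmetric, and every perfect `(σ,k)`-permutiple
is symmetric. -/
theorem stmt13 {n : ℕ} (a : Fin (n+1) → ℕ) (σ : Equiv.Perm (Fin (n+1))) (k : ℕ) :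
    (IsPermutiple a Fin.revPerm k → IsSymmetric a Fin.revPerm) ∧
    (IsPermutiple a σ k → IsPerfect a σ k → IsSymmetric a σ) := by
  constructor
  · intro _ j
    have h1 : (Fin.revPerm j : Fin (n+1)) = j.rev := rfl
    have h2 : (Fin.revPerm j.rev : Fin (n+1)) = j := by simp
    rw [h1, h2, mul_comm]
  · intro hp hperf j
    have hodd : Odd n := perfect_odd a σ k hp.1 hp.2.2.1 hperf
    have hsum : (j : ℕ) + (j.rev : ℕ) = n := by
      have := j.is_le; simp [Fin.rev]; omega
    rcases Nat.even_or_odd (j : ℕ) with he | ho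
    · have ho' : Odd (j.rev : ℕ) := by
        rcases hodd with ⟨m, hm⟩; rcases he with ⟨p, hpp⟩
        exact ⟨m - p, by omega⟩
      have h1 := (hperf j).1 he
      have h2 := (hperf j.rev).2 ho'
      rw [h1, h2]; ring
    · have he' : Even (j.rev : ℕ) := by
        rcases hodd with ⟨m, hm⟩; rcases ho with ⟨p, hpp⟩
        exact ⟨m - p, by omega⟩
      have h1 := (hperf j).2 ho
      have h2 := (hperf j.rev).1 he'
      rw [h1, h2]; ring
end

section
/- Let k > 1 be an integer and let d_0, d_1, …, d_m be finite strings of positive integers (each ending in a digit ≥ 2) such that each continued fraction [d_j] is a k-reverse multiple, i.e., [d_j] = k·[reverse of d_j], and such that the strings satisfy the palindromic condition d_j = d_{m−j} for all 0 ≤ j ≤ m. Then the continued fraction of the concatenated string d_0 d_1 ⋯ d_m is also a k-reverse multiple: [d_0 d_1 ⋯ d_m] = k·[reverse of d_0 d_1 ⋯ d_m]. -/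
/-!
Attach to a digit string `s` the matrix `M(s) = ∏ [[x, 1], [1, 0]]` over its digits. Its first column
gives `[s] = M₀₀ / M₁₀`, and since `M(reverse s) = M(s)ᵀ`, also `[reverse s] = M₀₀ / M₀₁`. So `s` is a
`k`-reverse multiple exactly when `M₀₁ = k M₁₀`, i.e. when `D M = Mᵀ D` for `D = diag(1, k)`.
This relation is preserved by products in the form `D (A₁ ⋯ Aₙ) = (A₁ᵀ ⋯ Aₙᵀ) D`, and for a palindromic
sequence of blocks `A₁ᵀ ⋯ Aₙᵀ = Aₙᵀ ⋯ A₁ᵀ = (A₁ ⋯ Aₙ)ᵀ`.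
-/

open Matrix

theorem SemiconjBy.list_prod_map {M : Type*} [Monoid M] {a : M} {f : M → M} {l : List M}
    (h : ∀ x ∈ l, SemiconjBy a x (f x)) : SemiconjBy a l.prod (l.map f).prod := by
  induction l with
  | nil => exact SemiconjBy.one_right a
  | cons x l ih =>
    simp only [List.prod_cons, List.map_cons]
    exact (h x List.mem_cons_self).mul_right (ih fun y hy => h y (List.mem_cons_of_mem x hy))

theorem List.reverse_ofFn {α : Type*} {n : ℕ} (f : Fin n → α) :
    (List.ofFn f).reverse = List.ofFn fun i => f i.rev := by
  refine List.ext_getElem (by simp) fun i hi _ => ?_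
  simp only [List.length_reverse, List.length_ofFn] at hi
  simp only [List.getElem_reverse, List.getElem_ofFn, List.length_ofFn]
  congr 1
  ext
  simp only [Fin.val_rev]
  omega

theorem Matrix.semiconjBy_diagonal_transpose_iff {R : Type*} [CommRing R] (k : R)
    (A : Matrix (Fin 2) (Fin 2) R) :
    SemiconjBy (diagonal ![1, k]) A Aᵀ ↔ A 0 1 = k * A 1 0 := by
  constructor
  · intro h
    simpa [mul_comm] using congrFun (congrFun h 0) 1
  · intro h
    ext i j
    fin_cases i <;> fin_cases j <;> simp [h, mul_comm]

def cfMatrix (s : List ℚ) : Matrix (Fin 2) (Fin 2) ℚ :=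
  (s.map fun x => !![x, 1; 1, 0]).prod

theorem cfMatrix_cons (x : ℚ) (s : List ℚ) : cfMatrix (x :: s) = !![x, 1; 1, 0] * cfMatrix s := by
  simp [cfMatrix]

theorem cfMatrix_flatten (L : List (List ℚ)) : cfMatrix L.flatten = (L.map cfMatrix).prod := by
  rw [cfMatrix, List.map_flatten, List.prod_flatten, List.map_map]
  rfl

theorem cfMatrix_reverse (s : List ℚ) : cfMatrix s.reverse = (cfMatrix s)ᵀ := by
  rw [cfMatrix, cfMatrix, transpose_list_prod, List.map_map, ← List.map_reverse]
  congr 2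
  funext x
  ext i j
  fin_cases i <;> fin_cases j <;> rfl

theorem cfMatrix_nonneg {s : List ℚ} (hs : ∀ x ∈ s, 0 ≤ x) (i j : Fin 2) : 0 ≤ cfMatrix s i j := by
  induction s generalizing i j with
  | nil => by_cases hij : i = j <;> simp [cfMatrix, one_apply, hij]
  | cons x s ih =>
    have hx := hs x List.mem_cons_self
    have ih := ih fun y hy => hs y (List.mem_cons_of_mem x hy)
    rw [cfMatrix_cons]
    fin_cases i <;> simp only [mul_apply, Fin.sum_univ_two, Fin.zero_eta, Fin.mk_one, of_apply,
      cons_val', cons_val_zero, cons_val_one, empty_val', cons_val_fin_one, one_mul, zero_mul,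
      add_zero]
    · exact add_nonneg (mul_nonneg hx (ih 0 j)) (ih 1 j)
    · exact ih 0 j

theorem cfMatrix_zero_zero_pos {s : List ℚ} (hs : ∀ x ∈ s, 0 < x) : 0 < cfMatrix s 0 0 := by
  induction s with
  | nil => simp [cfMatrix]
  | cons x s ih =>
    have hx := hs x List.mem_cons_self
    have hs' : ∀ y ∈ s, 0 < y := fun y hy => hs y (List.mem_cons_of_mem x hy)
    have h₁₀ := cfMatrix_nonneg (fun y hy => (hs' y hy).le) 1 0
    rw [cfMatrix_cons]
    simp only [mul_apply, Fin.sum_univ_two, of_apply, cons_val', cons_val_zero, cons_val_one,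
      empty_val', cons_val_fin_one, one_mul]
    exact add_pos_of_pos_of_nonneg (mul_pos hx (ih hs')) h₁₀

theorem cfMatrix_one_zero_pos {s : List ℚ} (hs : ∀ x ∈ s, 0 < x) (hne : s ≠ []) :
    0 < cfMatrix s 1 0 := by
  obtain ⟨x, s, rfl⟩ := List.exists_cons_of_ne_nil hne
  rw [cfMatrix_cons]
  simpa [mul_apply, Fin.sum_univ_two] using
    cfMatrix_zero_zero_pos fun y hy => hs y (List.mem_cons_of_mem x hy)

theorem cfMatrix_zero_one_pos {s : List ℚ} (hs : ∀ x ∈ s, 0 < x) (hne : s ≠ []) :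
    0 < cfMatrix s 0 1 := by
  simpa [cfMatrix_reverse] using
    cfMatrix_one_zero_pos (s := s.reverse) (by simpa using hs) (by simpa using hne)

/-- `cfv [] = 0` and `0⁻¹ = 0` make this recursion hold also for `s = []`. -/
theorem cfv_cons_s18 (x : ℚ) (s : List ℚ) : cfv (x :: s) = x + (cfv s)⁻¹ := by
  cases s <;> simp [cfv]

theorem cfv_eq_div {s : List ℚ} (hs : ∀ x ∈ s, 0 < x) :
    cfv s = cfMatrix s 0 0 / cfMatrix s 1 0 := by
  induction s with
  | nil => simp [cfv, cfMatrix]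
  | cons x s ih =>
    have hs' : ∀ y ∈ s, 0 < y := fun y hy => hs y (List.mem_cons_of_mem x hy)
    have h₀₀ := (cfMatrix_zero_zero_pos hs').ne'
    rw [cfv_cons_s18, ih hs', cfMatrix_cons]
    simp only [inv_div, mul_apply, of_apply, cons_val', cons_val_fin_one, cons_val_zero,
      Fin.sum_univ_two, cons_val_one, one_mul, zero_mul, add_zero]
    field_simp

theorem cfv_reverse_eq_div {s : List ℚ} (hs : ∀ x ∈ s, 0 < x) :
    cfv s.reverse = cfMatrix s 0 0 / cfMatrix s 0 1 := by
  rw [cfv_eq_div (by simpa using hs), cfMatrix_reverse, transpose_apply, transpose_apply]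

theorem cfv_eq_mul_cfv_reverse_iff (k : ℚ) {s : List ℚ} (hs : ∀ x ∈ s, 0 < x) :
    cfv s = k * cfv s.reverse ↔ cfMatrix s 0 1 = k * cfMatrix s 1 0 := by
  rcases eq_or_ne s [] with rfl | hne
  · simp [cfv, cfMatrix]
  have h₀₀ := (cfMatrix_zero_zero_pos hs).ne'
  have h₁₀ := (cfMatrix_one_zero_pos hs hne).ne'
  have h₀₁ := (cfMatrix_zero_one_pos hs hne).ne'
  rw [cfv_eq_div hs, cfv_reverse_eq_div hs, mul_div_assoc', div_eq_div_iff h₁₀ h₀₁,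
    mul_comm k, mul_assoc, mul_right_inj' h₀₀]

theorem cfv_flatten_eq_mul_cfv_reverse_of_palindrome (k : ℚ) {L : List (List ℚ)}
    (hpos : ∀ s ∈ L, ∀ x ∈ s, 0 < x) (hrev : ∀ s ∈ L, cfv s = k * cfv s.reverse)
    (hpal : L.Palindrome) :
    cfv L.flatten = k * cfv L.flatten.reverse := by
  have hflat : ∀ x ∈ L.flatten, 0 < x := by
    simpa [List.mem_flatten] using fun x s hs hx => hpos s hs x hx
  have hblock : ∀ A ∈ L.map cfMatrix, SemiconjBy (diagonal ![1, k]) A Aᵀ := by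
    simp only [List.mem_map, forall_exists_index, and_imp, forall_apply_eq_imp_iff₂]
    exact fun s hs => (semiconjBy_diagonal_transpose_iff k _).2
      ((cfv_eq_mul_cfv_reverse_iff k (hpos s hs)).1 (hrev s hs))
  have htranspose : ((L.map cfMatrix).map transpose).prod = (cfMatrix L.flatten)ᵀ := by
    rw [cfMatrix_flatten, transpose_list_prod, ← List.map_reverse, ← List.map_reverse, hpal.reverse_eq]
  rw [cfv_eq_mul_cfv_reverse_iff k hflat, ← semiconjBy_diagonal_transpose_iff, ← htranspose,
    cfMatrix_flatten]
  exact SemiconjBy.list_prod_map hblock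

theorem stmt18_general (k m : ℕ) (d : Fin (m+1) → List ℕ)
    (hpos : ∀ j, ∀ x ∈ d j, 0 < x)
    (hrev : ∀ j, cfv ((d j).map (fun x => (x : ℚ))) =
      k * cfv ((d j).reverse.map (fun x => (x : ℚ))))
    (hpal : ∀ j : Fin (m+1), d j = d (j.rev)) :
    cfv ((List.ofFn d).flatten.map (fun x => (x : ℚ))) =
      k * cfv ((List.ofFn d).flatten.reverse.map (fun x => (x : ℚ))) := by
  -- `l.map (fun x => (x : ℚ))` elaborates as `List.map id` of the monadic coercion of `l : List ℕ`
  simp only [List.map_id_fun', id_eq, bind_pure_comp, List.map_eq_map] at hrev ⊢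
  rw [List.map_reverse, List.map_flatten, List.map_ofFn]
  apply cfv_flatten_eq_mul_cfv_reverse_of_palindrome
  · intro s hs
    obtain ⟨j, rfl⟩ := List.mem_ofFn.1 hs
    simpa using hpos j
  · intro s hs
    obtain ⟨j, rfl⟩ := List.mem_ofFn.1 hs
    simpa [List.map_reverse] using hrev j
  · refine List.Palindrome.of_reverse_eq ?_
    rw [List.reverse_ofFn]
    exact congrArg List.ofFn (funext fun j => by simp [← hpal j])

/-- A palindromic concatenation of `k`-reverse multiples is a `k`-reverse multiple:
if each digit string `d_j` (positive digits, last digit ≥ 2) satisfies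
`[d_j] = k·[reverse d_j]` and `d_j = d_{m−j}` for all `j`, then the concatenated
string `d_0 d_1 ⋯ d_m` satisfies the same reverse-multiple equation. -/
theorem stmt18 (k m : ℕ) (hk : 1 < k) (d : Fin (m+1) → List ℕ)
    (hne : ∀ j, d j ≠ [])
    (hpos : ∀ j, ∀ x ∈ d j, 0 < x)
    (hlast : ∀ j (h : d j ≠ []), 2 ≤ (d j).getLast h)
    (hrev : ∀ j, cfv ((d j).map (fun x => (x : ℚ))) =
      k * cfv ((d j).reverse.map (fun x => (x : ℚ))))
    (hpal : ∀ j : Fin (m+1), d j = d (j.rev)) :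
    cfv ((List.ofFn d).flatten.map (fun x => (x : ℚ))) =
      k * cfv ((List.ofFn d).flatten.reverse.map (fun x => (x : ℚ))) :=
  stmt18_general k m d hpos hrev hpal
end

section
/- Every perfect (σ,k)-permutiple [a_0; a_1, …, a_n] is a Landess permutiple; that is, it is continuant-preserving and satisfies q_{n−1} = q'_{n−1} and p_{n−1} = k·p'_{n−1}, where p_j = K_{j+1}(a_0, …, a_j), q_j = K_j(a_1, …, a_j) are the convergent numerators and denominators of [a_0; …, a_n] and p'_j, q'_j are those of [a_{σ(0)}; …, a_{σ(n)}]. -/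
/-!
Write `b = a ∘ σ`. Perfectness says that `b` arises from `a` by dividing the digits in even
positions by `k` and multiplying those in odd positions by `k`. Along the continuant recurrence
such an alternating rescaling changes a continuant of `m` entries by the factor
`k ^ (⌊m/2⌋ - ⌈m/2⌉)`, i.e. not at all for `m` even and by `1/k` for `m` odd.
Since `σ` preserves the product of all digits, the rescaling factors `k^{±1}` must cancel, so the
string has as many even as odd positions: `n + 1` is even. The three Landess identities are then
the rescaling identity for `a₀ … aₙ` (even length), for `a₁ … a_{n-1}` (even length, with the
roles of `a` and `b` exchanged) and for `a₀ … a_{n-1}` (odd length).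
-/

theorem List.tail_ofFn {α : Type*} {m : ℕ} (f : Fin (m + 1) → α) :
    (List.ofFn f).tail = List.ofFn (fun i : Fin m => f i.succ) := by
  rw [List.ofFn_succ, List.tail_cons]

theorem List.dropLast_ofFn {α : Type*} {m : ℕ} (f : Fin (m + 1) → α) :
    (List.ofFn f).dropLast = List.ofFn (fun i : Fin m => f i.castSucc) := by
  rw [List.ofFn_succ', List.concat_eq_append, List.dropLast_concat]

def AltScaled (k : ℕ) {m : ℕ} (f g : Fin m → ℕ) : Prop :=
  ∀ i : Fin m, (Even (i : ℕ) → f i = k * g i) ∧ (Odd (i : ℕ) → g i = k * f i)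

namespace AltScaled

variable {k m : ℕ}

theorem tail {f g : Fin (m + 1) → ℕ} (h : AltScaled k f g) :
    AltScaled k (fun i => g i.succ) (fun i => f i.succ) := fun i =>
  ⟨fun he => (h i.succ).2 (by simpa [Nat.odd_add_one] using he),
    fun ho => (h i.succ).1 (by simpa [Nat.even_add_one] using ho)⟩

theorem init {f g : Fin (m + 1) → ℕ} (h : AltScaled k f g) :
    AltScaled k (fun i => f i.castSucc) (fun i => g i.castSucc) := fun i => h i.castSucc

theorem cont_mul_pow : ∀ {m : ℕ} {f g : Fin m → ℕ}, AltScaled k f g →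
    cont (List.ofFn g) * k ^ ((m + 1) / 2) = cont (List.ofFn f) * k ^ (m / 2)
  | 0, _, _, _ => by simp [cont]
  | 1, _, _, h => by simpa [cont, mul_comm] using ((h 0).1 (by simp)).symm
  | m + 2, f, g, h => by
    have h₁ := cont_mul_pow h.tail
    have h₂ := cont_mul_pow h.tail.tail
    have hf₀ : f 0 = k * g 0 := (h 0).1 (by simp)
    simp only [List.ofFn_succ, cont] at h₁ h₂ ⊢
    rw [show (m + 1 + 1) / 2 = m / 2 + 1 by omega, pow_succ] at h₁
    rw [show (m + 2 + 1) / 2 = (m + 1) / 2 + 1 by omega, show (m + 2) / 2 = m / 2 + 1 by omega,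
      hf₀, pow_succ, pow_succ]
    linear_combination (k * g 0) * h₁.symm + k * h₂

theorem cont_ofFn_eq_of_even {f g : Fin m → ℕ} (h : AltScaled k f g) (hk : 0 < k)
    (hm : Even m) : cont (List.ofFn f) = cont (List.ofFn g) := by
  obtain ⟨t, rfl⟩ := hm
  have := h.cont_mul_pow
  rw [show (t + t + 1) / 2 = t by omega, show (t + t) / 2 = t by omega] at this
  exact (Nat.eq_of_mul_eq_mul_right (pow_pos hk t) this).symm

theorem cont_ofFn_eq_mul_of_odd {f g : Fin m → ℕ} (h : AltScaled k f g) (hk : 0 < k)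
    (hm : Odd m) : cont (List.ofFn f) = k * cont (List.ofFn g) := by
  obtain ⟨t, rfl⟩ := hm
  have := h.cont_mul_pow
  rw [show (2 * t + 1 + 1) / 2 = t + 1 by omega, show (2 * t + 1) / 2 = t by omega, pow_succ',
    ← mul_assoc] at this
  exact (Nat.eq_of_mul_eq_mul_right (pow_pos hk t) this).symm.trans (mul_comm _ _)

theorem even_of_perm {f : Fin m → ℕ} {σ : Equiv.Perm (Fin m)} (hk : 1 < k)
    (hf : ∀ i, 0 < f i) (h : AltScaled k f (f ∘ σ)) : Even m := by
  classical
  set E := Finset.univ.filter (fun i : Fin m => Even (i : ℕ))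
  set O := Finset.univ.filter (fun i : Fin m => ¬Even (i : ℕ))
  have hpt : ∀ i, f i * k ^ (if ¬Even (i : ℕ) then 1 else 0)
      = f (σ i) * k ^ (if Even (i : ℕ) then 1 else 0) := fun i => by
    by_cases hi : Even (i : ℕ)
    · simp [hi, (h i).1 hi, mul_comm]
    · simpa [hi, mul_comm] using ((h i).2 (Nat.not_even_iff_odd.mp hi)).symm
  have hprod : (∏ i, f i) * k ^ O.card = (∏ i, f i) * k ^ E.card := by
    have := Finset.prod_congr rfl fun i (_ : i ∈ Finset.univ) => hpt i
    rwa [Finset.prod_mul_distrib, Finset.prod_mul_distrib, Finset.prod_pow_eq_pow_sum,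
      Finset.prod_pow_eq_pow_sum, Finset.sum_boole, Finset.sum_boole, Equiv.prod_comp σ f] at this
  have hcard : O.card = E.card :=
    Nat.pow_right_injective hk (Nat.eq_of_mul_eq_mul_left (Finset.prod_pos fun i _ => hf i) hprod)
  have htotal : E.card + O.card = m := by
    have := Finset.card_filter_add_card_filter_not (s := Finset.univ) (fun i : Fin m => Even (i : ℕ))
    rwa [Finset.card_univ, Fintype.card_fin] at this
  exact ⟨E.card, by omega⟩

end AltScaled

/-- Every perfect `(σ,k)`-permutiple is a Landess permutiple: it is
continuant-preserving and satisfies `q_{n−1} = q'_{n−1}` and `p_{n−1} = k·p'_{n−1}`. -/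
theorem stmt19 {n : ℕ} (a : Fin (n+1) → ℕ) (σ : Equiv.Perm (Fin (n+1))) (k : ℕ)
    (h : IsPermutiple a σ k) (hp : IsPerfect a σ k) :
    IsLandess a σ k := by
  have hpos : ∀ j, 0 < a j := h.1
  have hk : 1 < k := h.2.2.1
  have hs : AltScaled k a (a ∘ σ) := hp
  obtain ⟨t, rfl⟩ : ∃ t, n = 2 * t + 1 := by
    obtain ⟨s, hn⟩ := hs.even_of_perm hk hpos
    exact ⟨s - 1, by omega⟩
  have hk₀ : 0 < k := by omega
  refine ⟨h, hs.cont_ofFn_eq_of_even hk₀ ⟨t + 1, by omega⟩, ?_, ?_⟩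
  · rw [List.tail_ofFn, List.tail_ofFn, List.dropLast_ofFn, List.dropLast_ofFn]
    exact (hs.tail.init.cont_ofFn_eq_of_even hk₀ ⟨t, by omega⟩).symm
  · rw [List.dropLast_ofFn, List.dropLast_ofFn]
    exact hs.init.cont_ofFn_eq_mul_of_odd hk₀ ⟨t, rfl⟩
end
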